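/- arXiv:1111.6612 — 2 statements merged into one kernel-verified Lean document; each statement's English description precedes it below -/
import Mathlib

section
/- Vanishing property: if A and B are alphabets of cardinalities m and n respectively, and the diagram of a partition I is not contained in the (m,n)-hook, then S_I(A − B) = 0. -/
/-!
Let `T > m` be the number of parts exceeding `n` and `r = s - T`; by monotonicity these are
the parts `i_q` with `q ≥ r`. Multiplying the Jacobi–Trudi matrix on the left by the
unitriangular Toeplitz matrix of the coefficients `e_t` of `∏_{a ∈ A} (1 - a z)` turns row `p`
into `∑_t e_t S_{k - t}(A - B)` with `k = i_q + q - p`. Since `∏ (1 - a z) · ∑ S_j(A - B) z^j`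
is the polynomial `∏_{b ∈ B} (1 - b z)` of degree `n`, this vanishes whenever `k > n` and all
`m + 1` coefficients fit below row `p`, i.e. for `p ≤ r` and `q ≥ r`. A zero block of size
`(r + 1) × T` with `r + 1 + T > s` kills the determinant.
-/

open scoped Classical

noncomputable section

/-- The generating series `∏_{a ∈ A} (1 - a z)` of an alphabet `A`. -/
def genS {R : Type*} [CommRing R] (A : Multiset R) : PowerSeries R :=
  (A.map (fun a => 1 - PowerSeries.C a * PowerSeries.X)).prod

/-- The complete function `S_j(A - B)` of a difference of alphabets, defined by the
generating series `∑ S_j(A-B) z^j = ∏_{b∈B}(1-bz) / ∏_{a∈A}(1-az)`. -/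
def SD {R : Type*} [CommRing R] (A B : Multiset R) (j : ℤ) : R :=
  if j < 0 then 0
  else PowerSeries.coeff j.toNat (genS B * PowerSeries.invOfUnit (genS A) 1)

/-- The Schur function `S_I(A - B)` for an index sequence `I` (written in the weakly
increasing convention), given by the Jacobi–Trudi determinant `|S_{i_q + q - p}(A-B)|`. -/
def SchurD {R : Type*} [CommRing R] (A B : Multiset R) {s : ℕ} (I : Fin s → ℕ) : R :=
  Matrix.det (Matrix.of fun p q : Fin s => SD A B ((I q : ℤ) + (q : ℤ) - (p : ℤ)))

/-- The resultant `R(A,B) = ∏_{a∈A, b∈B} (a - b)` of two alphabets. -/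
def Res {R : Type*} [CommRing R] (A B : Multiset R) : R :=
  (A.map (fun a => (B.map (fun b => a - b)).prod)).prod

open Finset

theorem Matrix.det_eq_zero_of_card_lt_card_add_card {n R : Type*} [Fintype n] [DecidableEq n]
    [CommRing R] (M : Matrix n n R) (P Q : Finset n) (hcard : Fintype.card n < #P + #Q)
    (hM : ∀ p ∈ P, ∀ q ∈ Q, M p q = 0) : M.det = 0 := by
  refine (Matrix.det_apply M).trans (sum_eq_zero fun σ _ => ?_)
  have hσQ : #(Q.map σ.toEmbedding) = #Q := card_map _
  obtain ⟨p, hp⟩ := inter_nonempty_of_card_lt_card_add_card (subset_univ P)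
    (subset_univ (Q.map σ.toEmbedding)) (by rwa [card_univ, hσQ])
  obtain ⟨hpP, hpQ⟩ := mem_inter.mp hp
  obtain ⟨q, hq, rfl⟩ := mem_map.mp hpQ
  exact smul_eq_zero_of_right _ (prod_eq_zero (mem_univ q) (hM (σ q) hpP q hq))

theorem Monotone.lt_apply_of_sub_card_filter_le {α : Type*} [Preorder α] [DecidableLT α]
    {s : ℕ} {I : Fin s → α} (hI : Monotone I) {n : α} {q : Fin s}
    (hq : s - #{p | n < I p} ≤ q) : n < I q := by
  by_contra hnq
  have hsub : ({p | n < I p} : Finset (Fin s)) ⊆ Ioi q := fun p hp => by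
    rw [mem_filter] at hp
    exact mem_Ioi.mpr (lt_of_not_ge fun hpq => hnq (hp.2.trans_le (hI hpq)))
  have := card_le_card hsub
  rw [Fin.card_Ioi] at this
  omega

section Toeplitz

variable {R : Type*} [CommRing R] {s : ℕ}

def upperToeplitz (c : ℕ → R) : Matrix (Fin s) (Fin s) R :=
  Matrix.of fun p p' => if p ≤ p' then c (p' - p) else 0

theorem det_upperToeplitz (c : ℕ → R) :
    (upperToeplitz c : Matrix (Fin s) (Fin s) R).det = c 0 ^ s := by
  rw [Matrix.det_of_isUpperTriangular]
  · simp [upperToeplitz]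
  · intro p p' h
    simp [upperToeplitz, not_le.mpr (show p' < p from h)]

theorem upperToeplitz_mul_of_apply (c : ℕ → R) (f : ℤ → R) (k : Fin s → ℤ) (p q : Fin s) :
    (upperToeplitz c * Matrix.of fun p q : Fin s => f (k q - p) :
      Matrix (Fin s) (Fin s) R) p q = ∑ t ∈ range (s - p), c t * f (k q - p - t) := by
  simp only [Matrix.mul_apply, upperToeplitz, Matrix.of_apply, ite_mul, zero_mul, Fin.le_def]
  rw [Fin.sum_univ_eq_sum_range
      (fun j => if (p : ℕ) ≤ j then c (j - p) * f (k q - j) else 0), ← sum_filter,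
    show {j ∈ range s | (p : ℕ) ≤ j} = Ico (p : ℕ) s by ext; simp [and_comm],
    sum_Ico_eq_sum_range]
  refine sum_congr rfl fun t _ => ?_
  rw [Nat.add_sub_cancel_left, Nat.cast_add, sub_add_eq_sub_sub]

end Toeplitz

section Alphabet

variable {R : Type*} [CommRing R]

theorem constantCoeff_genS (A : Multiset R) : PowerSeries.constantCoeff (genS A) = 1 := by
  simp [genS, map_multiset_prod, Multiset.map_map]

theorem genS_cons (a : R) (A : Multiset R) :
    genS (a ::ₘ A) = (1 - PowerSeries.C a * PowerSeries.X) * genS A := by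
  simp [genS]

theorem coeff_genS_of_card_lt (A : Multiset R) {k : ℕ} (hk : Multiset.card A < k) :
    PowerSeries.coeff k (genS A) = 0 := by
  induction A using Multiset.induction_on generalizing k with
  | empty =>
    obtain ⟨j, rfl⟩ := Nat.exists_eq_add_of_lt hk
    simp [genS, PowerSeries.coeff_one]
  | cons a A ih =>
    obtain ⟨j, rfl⟩ := Nat.exists_eq_add_of_lt (Nat.zero_lt_of_lt hk)
    rw [Multiset.card_cons] at hk
    rw [genS_cons, sub_mul, one_mul, mul_assoc, map_sub, PowerSeries.coeff_C_mul, zero_add,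
      PowerSeries.coeff_succ_X_mul, ih (by omega), ih (by omega), mul_zero, sub_zero]

theorem SD_of_neg (A B : Multiset R) {j : ℤ} (hj : j < 0) : SD A B j = 0 := if_pos hj

theorem SD_natCast (A B : Multiset R) (j : ℕ) :
    SD A B j = PowerSeries.coeff j (genS B * PowerSeries.invOfUnit (genS A) 1) := by
  simp [SD]

theorem sum_coeff_genS_mul_SD_eq_zero (A B : Multiset R) {N : ℕ} (hN : Multiset.card A < N)
    {k : ℤ} (hk : Multiset.card B < k) :
    ∑ t ∈ range N, PowerSeries.coeff t (genS A) * SD A B (k - t) = 0 := by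
  lift k to ℕ using by omega
  set F := genS B * PowerSeries.invOfUnit (genS A) 1
  have hF : genS A * F = genS B := by
    rw [mul_left_comm, PowerSeries.mul_invOfUnit _ _ (by simp [constantCoeff_genS]), mul_one]
  calc ∑ t ∈ range N, PowerSeries.coeff t (genS A) * SD A B (k - t)
      = ∑ t ∈ range (N + k + 1), PowerSeries.coeff t (genS A) * SD A B (k - t) :=
        sum_subset (range_subset_range.mpr (by omega)) fun t _ ht => by
          rw [coeff_genS_of_card_lt A (by simp at ht; omega), zero_mul]
    _ = ∑ t ∈ range (k + 1), PowerSeries.coeff t (genS A) * SD A B (k - t) :=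
        (sum_subset (range_subset_range.mpr (by omega)) fun t _ ht => by
          rw [SD_of_neg A B (by simp at ht; omega), mul_zero]).symm
    _ = ∑ t ∈ range (k + 1), PowerSeries.coeff t (genS A) * PowerSeries.coeff (k - t) F :=
        sum_congr rfl fun t ht => by
          rw [← SD_natCast, Nat.cast_sub (by simp at ht; omega)]
    _ = 0 := by
      rw [← Nat.sum_antidiagonal_eq_sum_range_succ
          (fun i j => PowerSeries.coeff i (genS A) * PowerSeries.coeff j F),
        ← PowerSeries.coeff_mul, hF, coeff_genS_of_card_lt B (by omega)]

end Alphabet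

theorem SchurD_eq_zero_of_card_lt {R : Type*} [CommRing R] (A B : Multiset R) {s : ℕ}
    (I : Fin s → ℕ) (hI : Monotone I)
    (hhook : Multiset.card A < #{p : Fin s | Multiset.card B < I p}) :
    SchurD A B I = 0 := by
  set T := #{p : Fin s | Multiset.card B < I p}
  have hTs : T ≤ s := (card_filter_le _ _).trans_eq (card_fin s)
  let r : Fin s := ⟨s - T, by omega⟩
  have hE : (upperToeplitz fun t => PowerSeries.coeff t (genS A) :
      Matrix (Fin s) (Fin s) R).det = 1 := by
    rw [det_upperToeplitz, PowerSeries.coeff_zero_eq_constantCoeff_apply, constantCoeff_genS,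
      one_pow]
  rw [SchurD, ← one_mul (Matrix.det _), ← hE, ← Matrix.det_mul]
  refine Matrix.det_eq_zero_of_card_lt_card_add_card _ (Iic r) (Ici r)
    (by simp only [Fintype.card_fin, Fin.card_Iic, Fin.card_Ici, r]; omega) fun p hp q hq => ?_
  have hpr : (p : ℕ) ≤ s - T := Fin.le_def.mp (mem_Iic.mp hp)
  have hrq : s - T ≤ (q : ℕ) := Fin.le_def.mp (mem_Ici.mp hq)
  have hIq : Multiset.card B < I q := hI.lt_apply_of_sub_card_filter_le hrq
  rw [upperToeplitz_mul_of_apply _ (SD A B) (fun q => (I q : ℤ) + q)]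
  exact sum_coeff_genS_mul_SD_eq_zero A B (by omega) (by omega)

/-- Vanishing property: if `A`, `B` are alphabets of cardinalities `m`, `n` and the
partition `I` is not contained in the `(m,n)`-hook (i.e. more than `m` parts of `I`
exceed `n`), then `S_I(A − B) = 0`. -/
theorem schur_vanishing {σ : Type*} (A B : Finset σ) (m n : ℕ)
    (hA : A.card = m) (hB : B.card = n) {s : ℕ} (I : Fin s → ℕ) (hI : Monotone I)
    (hhook : m < (Finset.univ.filter (fun p : Fin s => n < I p)).card) :
    SchurD (A.val.map (MvPolynomial.X (R := ℤ))) (B.val.map MvPolynomial.X) I = 0 := by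
  subst hA hB
  exact SchurD_eq_zero_of_card_lt _ _ I hI (by simpa using hhook)

end
end

section
/- Transformation Lemma for multi-Schur functions: let D^0, D^1, ..., D^{s−1} be alphabets with card(D^i) ≤ i. Then the multi-Schur function S_I(A^1 − B^1, ..., A^s − B^s) = |S_{i_q+q−p}(A^q − B^q)|_{1≤p,q≤s} equals the determinant |S_{i_q+q−p}(A^q − B^q − D^{s−p})|_{1≤p,q≤s}. -/
/-!
Subtracting `D` multiplies the generating series of `A - B` by the polynomial `genS D`, so
`S_j(A - B - D) = ∑_k e_k S_{j-k}(A - B)` with `e_k` the coefficients of `genS D`, which vanish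
for `k > card D`. Hence row `p` of the transformed matrix is row `p` of the original plus a
combination of the rows below it, as long as `card D^{s-1-p} < s - p`: the transformed matrix
is `L * M` with `L` upper unitriangular, and `det L = 1`.
-/

open scoped Classical

noncomputable section

open PowerSeries

section Alphabets

variable {R : Type*} [CommRing R]

lemma coeff_zero_genS (D : Multiset R) : coeff 0 (genS D) = 1 := by
  rw [coeff_zero_eq_constantCoeff_apply, genS, map_multiset_prod]
  simp [Multiset.map_map]

lemma genS_add (B D : Multiset R) : genS (B + D) = genS B * genS D := by
  simp only [genS, Multiset.map_add, Multiset.prod_add]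

lemma coeff_genS_of_card_lt_s8 (D : Multiset R) {n : ℕ} (hn : Multiset.card D < n) :
    coeff n (genS D) = 0 := by
  induction D using Multiset.induction generalizing n with
  | empty =>
    rw [Multiset.card_zero] at hn
    simp [genS, coeff_one, hn.ne']
  | cons a D ih =>
    rw [Multiset.card_cons] at hn
    obtain ⟨m, rfl⟩ : ∃ m, n = m + 1 := ⟨n - 1, by omega⟩
    have hcons : genS (a ::ₘ D) = genS D - C a * (X * genS D) := by
      simp only [genS, Multiset.map_cons, Multiset.prod_cons]; ring
    rw [hcons, map_sub, coeff_C_mul, coeff_succ_X_mul, ih (by omega), ih (by omega),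
      mul_zero, sub_zero]

lemma eq_sum_range_of_coeff_eq_zero (f : R⟦X⟧) {m : ℕ} (hf : ∀ i, m ≤ i → coeff i f = 0) :
    f = ∑ k ∈ Finset.range m, C (coeff k f) * X ^ k := by
  ext i
  simp only [map_sum, coeff_C_mul_X_pow, Finset.sum_ite_eq, Finset.mem_range]
  split_ifs with hi
  · rfl
  · exact hf i (not_lt.mp hi)

def sdSeries (A B : Multiset R) : R⟦X⟧ := genS B * invOfUnit (genS A) 1

lemma sdSeries_add_right (A B D : Multiset R) :
    sdSeries A (B + D) = genS D * sdSeries A B := by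
  rw [sdSeries, sdSeries, genS_add]; ring

lemma SD_natCast_s8 (A B : Multiset R) (n : ℕ) : SD A B n = coeff n (sdSeries A B) := by
  simp [SD, sdSeries]

lemma SD_natCast_sub (A B : Multiset R) (n k : ℕ) :
    SD A B ((n : ℤ) - k) = coeff n (X ^ k * sdSeries A B) := by
  rw [SD, coeff_X_pow_mul']
  split_ifs with hneg hk hk
  · omega
  · rfl
  · rw [show ((n : ℤ) - k).toNat = n - k by omega, sdSeries]
  · omega

lemma SD_add_right (A B D : Multiset R) (j : ℤ) {m : ℕ} (hm : Multiset.card D < m) :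
    SD A (B + D) j = ∑ k ∈ Finset.range m, coeff k (genS D) * SD A B (j - k) := by
  rcases lt_or_ge j 0 with hj | hj
  · simp [SD, hj, show ∀ k : ℕ, j - k < 0 by omega]
  obtain ⟨n, rfl⟩ := Int.eq_ofNat_of_zero_le hj
  have hD : genS D = ∑ k ∈ Finset.range m, C (coeff k (genS D)) * X ^ k :=
    eq_sum_range_of_coeff_eq_zero _ fun i hi => coeff_genS_of_card_lt_s8 D (by omega)
  calc SD A (B + D) n = coeff n (genS D * sdSeries A B) := by
        rw [SD_natCast_s8, sdSeries_add_right]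
    _ = ∑ k ∈ Finset.range m, coeff k (genS D) * coeff n (X ^ k * sdSeries A B) := by
        conv_lhs => rw [hD]
        simp only [Finset.sum_mul, map_sum, mul_assoc, coeff_C_mul]
    _ = _ := by simp only [SD_natCast_sub]

end Alphabets

section ShiftMatrix

variable {R : Type*} [CommRing R] {s : ℕ}

def coeffShiftMatrix (G : Fin s → R⟦X⟧) : Matrix (Fin s) (Fin s) R :=
  Matrix.of fun p r => if (p : ℕ) ≤ r then coeff ((r : ℕ) - p) (G p) else 0

lemma det_coeffShiftMatrix (G : Fin s → R⟦X⟧) (hG : ∀ p, coeff 0 (G p) = 1) :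
    (coeffShiftMatrix G).det = 1 := by
  rw [Matrix.det_of_isUpperTriangular]
  · exact Finset.prod_eq_one fun p _ => by simp [coeffShiftMatrix, hG]
  · intro p r hrp
    exact if_neg (not_le.mpr (show (r : ℕ) < p from hrp))

lemma sum_coeffShiftMatrix_mul (G : Fin s → R⟦X⟧) (v : ℕ → R) (p : Fin s) :
    ∑ r : Fin s, coeffShiftMatrix G p r * v r
      = ∑ k ∈ Finset.range (s - p), coeff k (G p) * v (p + k) := by
  let f : ℕ → R := fun r => (if (p : ℕ) ≤ r then coeff (r - p) (G p) else 0) * v r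
  have hlow : ∑ r ∈ Finset.Ico 0 (p : ℕ), f r = 0 :=
    Finset.sum_eq_zero fun r hr => by simp [f, (Finset.mem_Ico.mp hr).2]
  calc ∑ r : Fin s, coeffShiftMatrix G p r * v r = ∑ r ∈ Finset.range s, f r :=
        Fin.sum_univ_eq_sum_range f s
    _ = ∑ r ∈ Finset.Ico (p : ℕ) s, f r := by
        rw [Finset.range_eq_Ico, ← Finset.sum_Ico_consecutive f (Nat.zero_le p) p.is_lt.le,
          hlow, zero_add]
    _ = _ := by simp [Finset.sum_Ico_eq_sum_range, f]

end ShiftMatrix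

theorem transformation_lemma_general {R : Type*} [CommRing R] {s : ℕ}
    (A B D : Fin s → Multiset R) (hD : ∀ p : Fin s, Multiset.card (D p) ≤ (p : ℕ))
    (I : Fin s → ℕ) :
    Matrix.det (Matrix.of fun p q : Fin s =>
        SD (A q) (B q) ((I q : ℤ) + (q : ℤ) - (p : ℤ)))
      = Matrix.det (Matrix.of fun p q : Fin s =>
        SD (A q) (B q + D p.rev) ((I q : ℤ) + (q : ℤ) - (p : ℤ))) := by
  have hcard (p : Fin s) : Multiset.card (D p.rev) < s - p := by
    have := hD p.rev
    rw [Fin.val_rev] at this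
    omega
  have hmul : (Matrix.of fun p q : Fin s =>
        SD (A q) (B q + D p.rev) ((I q : ℤ) + (q : ℤ) - (p : ℤ)))
      = coeffShiftMatrix (fun p => genS (D p.rev)) * Matrix.of fun p q : Fin s =>
        SD (A q) (B q) ((I q : ℤ) + (q : ℤ) - (p : ℤ)) := by
    ext p q
    simp only [Matrix.mul_apply, Matrix.of_apply]
    rw [SD_add_right _ _ _ _ (hcard p),
      sum_coeffShiftMatrix_mul _ (fun r : ℕ => SD (A q) (B q) ((I q : ℤ) + q - r))]
    refine Finset.sum_congr rfl fun k _ => ?_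
    congr 2
    push_cast
    ring
  rw [hmul, Matrix.det_mul, det_coeffShiftMatrix _ fun p => coeff_zero_genS _, one_mul]

/-- Transformation Lemma for multi-Schur functions: if `D^0, …, D^{s-1}` are alphabets
with `card(D^i) ≤ i`, then the multi-Schur determinant `|S_{i_q+q−p}(A^q − B^q)|`
equals `|S_{i_q+q−p}(A^q − B^q − D^{s−p})|` (rows indexed by `p`, columns by `q`;
in 0-indexed form row `p` uses `D^{s-1-p}`). -/
theorem transformation_lemma {R : Type*} [CommRing R] {s : ℕ}
    (A B D : Fin s → Multiset R) (hD : ∀ p : Fin s, Multiset.card (D p) ≤ (p : ℕ))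
    (I : Fin s → ℕ) (hI : Monotone I) :
    Matrix.det (Matrix.of fun p q : Fin s =>
        SD (A q) (B q) ((I q : ℤ) + (q : ℤ) - (p : ℤ)))
      = Matrix.det (Matrix.of fun p q : Fin s =>
        SD (A q) (B q + D p.rev) ((I q : ℤ) + (q : ℤ) - (p : ℤ))) :=
  transformation_lemma_general A B D hD I
end
end
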